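/- arXiv:2406.19625 — 5 statements merged into one kernel-verified Lean document; each statement's English description precedes it below -/
import Mathlib

section
/- Let C be a triangulated category and D a functorially finite rigid subcategory (i.e., Hom(D, D[1]) = 0). Then the pair ((D, D[-1]^⊥), (^⊥D[1], D)) is a twin cotorsion pair: both pairs are cotorsion pairs and D ⊆ ^⊥D[1]; moreover it is concentric, i.e., D ∩ D[-1]^⊥ = ^⊥D[1] ∩ D = D. -/
/-!
STATEMENT 0: In a triangulated category `C`, if `D` is a functorially finite rigid
subcategory, then `((D, D[-1]^⊥), (^⊥D[1], D))` is a concentric twin cotorsion pair.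
-/

open CategoryTheory CategoryTheory.Limits CategoryTheory.Pretriangulated

universe v u

namespace Stmt0

variable (C : Type u) [Category.{v} C] [Preadditive C] [HasZeroObject C] [HasShift C ℤ]
  [∀ n : ℤ, (shiftFunctor C n).Additive] [Pretriangulated C]

variable {C}

/-- A collection of objects is closed under direct summands (hence under isomorphisms). -/
def ClosedSummands (D : Set C) : Prop :=
  ∀ ⦃X Y : C⦄, X ∈ D → ∀ (i : Y ⟶ X) (p : X ⟶ Y), i ≫ p = 𝟙 Y → Y ∈ D

/-- `D` is rigid: `Hom(D, D[1]) = 0`. -/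
def Rigid (D : Set C) : Prop :=
  ∀ ⦃d d' : C⦄, d ∈ D → d' ∈ D → ∀ f : d ⟶ d'⟦(1 : ℤ)⟧, f = 0

/-- `f : d ⟶ X` is a right `D`-approximation of `X`. -/
def RightApprox (D : Set C) {d X : C} (f : d ⟶ X) : Prop :=
  ∀ ⦃d' : C⦄, d' ∈ D → ∀ g : d' ⟶ X, ∃ h : d' ⟶ d, h ≫ f = g

/-- `f : X ⟶ d` is a left `D`-approximation of `X`. -/
def LeftApprox (D : Set C) {X d : C} (f : X ⟶ d) : Prop :=
  ∀ ⦃d' : C⦄, d' ∈ D → ∀ g : X ⟶ d', ∃ h : d ⟶ d', f ≫ h = g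

/-- `D` is functorially finite: every object admits a right and a left `D`-approximation. -/
def FunctoriallyFinite (D : Set C) : Prop :=
  (∀ X : C, ∃ d ∈ D, ∃ f : d ⟶ X, RightApprox D f) ∧
  (∀ X : C, ∃ d ∈ D, ∃ f : X ⟶ d, LeftApprox D f)

/-- `(U, V)` is a cotorsion pair: both classes are closed under direct summands,
`Hom(U, V[1]) = 0`, every object `X` sits in a triangle `V' ⟶ U' ⟶ X ⟶ V'[1]`
(i.e. `X ∈ Cone(V, U)`), and in a triangle `X ⟶ V' ⟶ U' ⟶ X[1]` (i.e. `X ∈ CoCone(V, U)`). -/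
def CotorsionPair (U V : Set C) : Prop :=
  ClosedSummands U ∧ ClosedSummands V ∧
  (∀ ⦃u v : C⦄, u ∈ U → v ∈ V → ∀ f : u ⟶ v⟦(1 : ℤ)⟧, f = 0) ∧
  (∀ X : C, ∃ v ∈ V, ∃ u ∈ U, ∃ (a : v ⟶ u) (b : u ⟶ X) (c : X ⟶ v⟦(1 : ℤ)⟧),
      Triangle.mk a b c ∈ distTriang C) ∧
  (∀ X : C, ∃ v ∈ V, ∃ u ∈ U, ∃ (a : X ⟶ v) (b : v ⟶ u) (c : u ⟶ X⟦(1 : ℤ)⟧),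
      Triangle.mk a b c ∈ distTriang C)

/-- `D[-1]^⊥ = {X : Hom(D[-1], X) = 0}`. -/
def perpOfShiftNegOne (D : Set C) : Set C :=
  {X | ∀ ⦃d : C⦄, d ∈ D → ∀ f : d⟦(-1 : ℤ)⟧ ⟶ X, f = 0}

/-- `^⊥(D[1]) = {X : Hom(X, D[1]) = 0}`. -/
def leftPerpOfShiftOne (D : Set C) : Set C :=
  {X | ∀ ⦃d : C⦄, d ∈ D → ∀ f : X ⟶ d⟦(1 : ℤ)⟧, f = 0}

/-!
Completing a right `D`-approximation `d ⟶ X` to a triangle `K ⟶ d ⟶ X ⟶ K⟦1⟧`, every map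
`d' ⟶ K⟦1⟧` with `d' ∈ D` factors through `X ⟶ K⟦1⟧` by rigidity, hence through `d ⟶ X ⟶ K⟦1⟧`,
which vanishes; so `K ∈ D[-1]^⊥`. Dually, a left approximation `X ⟶ d` gives a triangle
`X ⟶ d ⟶ Y ⟶ X⟦1⟧` with `Y ∈ ^⊥D[1]`. Rotating triangles of shifted objects turns either kind of
decomposition `C = U * V[1]`, `C = U[-1] * V` into the other, and the remaining conditions are
rigidity itself.
-/

def HasConeTriangles (U V : Set C) : Prop :=
  ∀ X : C, ∃ v ∈ V, ∃ u ∈ U, ∃ (a : v ⟶ u) (b : u ⟶ X) (c : X ⟶ v⟦(1 : ℤ)⟧),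
    Triangle.mk a b c ∈ distTriang C

def HasCoconeTriangles (U V : Set C) : Prop :=
  ∀ X : C, ∃ v ∈ V, ∃ u ∈ U, ∃ (a : X ⟶ v) (b : v ⟶ u) (c : u ⟶ X⟦(1 : ℤ)⟧),
    Triangle.mk a b c ∈ distTriang C

-- `simp` only identifies the objects of `Triangle.mk` with those of `T` once it is unfolded.
lemma Triangle.mk_mem_distTriang_of_iso_obj₁ {X : C} {T : Triangle C} (hT : T ∈ distTriang C)
    (e : X ≅ T.obj₁) :
    Triangle.mk (e.hom ≫ T.mor₁) T.mor₂ (T.mor₃ ≫ e.inv⟦(1 : ℤ)⟧') ∈ distTriang C := by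
  refine isomorphic_distinguished _ hT _ (Triangle.isoMk _ _ e (Iso.refl _) (Iso.refl _) ?_ ?_ ?_)
  all_goals dsimp [Triangle.mk]; simp

lemma Triangle.mk_mem_distTriang_of_iso_obj₃ {X : C} {T : Triangle C} (hT : T ∈ distTriang C)
    (e : T.obj₃ ≅ X) :
    Triangle.mk T.mor₁ (T.mor₂ ≫ e.hom) (e.inv ≫ T.mor₃) ∈ distTriang C := by
  refine isomorphic_distinguished _ hT _
    (Triangle.isoMk _ _ (Iso.refl _) (Iso.refl _) e.symm ?_ ?_ ?_)
  all_goals dsimp [Triangle.mk]; simp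

lemma HasConeTriangles.hasCoconeTriangles {U V : Set C} (h : HasConeTriangles U V) :
    HasCoconeTriangles U V := by
  intro X
  obtain ⟨v, hv, u, hu, a, b, c, hT⟩ := h (X⟦(1 : ℤ)⟧)
  exact ⟨v, hv, u, hu, _, _, _, Triangle.mk_mem_distTriang_of_iso_obj₁
    (inv_rot_of_distTriang _ hT) ((shiftEquiv C (1 : ℤ)).unitIso.app X)⟩

lemma HasCoconeTriangles.hasConeTriangles {U V : Set C} (h : HasCoconeTriangles U V) :
    HasConeTriangles U V := by
  intro X
  obtain ⟨v, hv, u, hu, a, b, c, hT⟩ := h (X⟦(-1 : ℤ)⟧)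
  exact ⟨v, hv, u, hu, _, _, _, Triangle.mk_mem_distTriang_of_iso_obj₃
    (rot_of_distTriang _ hT) ((shiftEquiv C (1 : ℤ)).counitIso.app X)⟩

section

omit [HasZeroObject C] [∀ n : ℤ, (shiftFunctor C n).Additive] [Pretriangulated C]

lemma mem_perpOfShiftNegOne_iff {D : Set C} {X : C} :
    X ∈ perpOfShiftNegOne D ↔ ∀ ⦃d : C⦄, d ∈ D → ∀ f : d ⟶ X⟦(1 : ℤ)⟧, f = 0 := by
  refine forall₂_congr fun d _ => ?_
  rw [← subsingleton_iff_forall_eq 0, ← subsingleton_iff_forall_eq 0]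
  exact ((shiftEquiv C (1 : ℤ)).symm.toAdjunction.homEquiv d X).subsingleton_congr

lemma closedSummands_perpOfShiftNegOne (D : Set C) : ClosedSummands (perpOfShiftNegOne D) := by
  intro X Y hX i p hip d hd f
  rw [← Category.comp_id f, ← hip, ← Category.assoc, hX hd (f ≫ i), zero_comp]

lemma closedSummands_leftPerpOfShiftOne (D : Set C) : ClosedSummands (leftPerpOfShiftOne D) := by
  intro X Y hX i p hip d hd f
  rw [← Category.id_comp f, ← hip, Category.assoc, hX hd (p ≫ f), comp_zero]

lemma Rigid.subset_leftPerpOfShiftOne {D : Set C} (hrig : Rigid D) : D ⊆ leftPerpOfShiftOne D :=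
  fun _ hd _ hd' f => hrig hd hd' f

lemma Rigid.subset_perpOfShiftNegOne {D : Set C} (hrig : Rigid D) : D ⊆ perpOfShiftNegOne D :=
  fun _ hd => mem_perpOfShiftNegOne_iff.2 fun _ hd' f => hrig hd' hd f

end

lemma Rigid.mem_perpOfShiftNegOne_of_distTriang {D : Set C} (hrig : Rigid D) {K d X : C}
    {a : K ⟶ d} {f : d ⟶ X} {c : X ⟶ K⟦(1 : ℤ)⟧} (hT : Triangle.mk a f c ∈ distTriang C)
    (hd : d ∈ D) (hf : RightApprox D f) : K ∈ perpOfShiftNegOne D := by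
  refine mem_perpOfShiftNegOne_iff.2 fun d' hd' m => ?_
  have hfc : f ≫ c = 0 := comp_distTriang_mor_zero₂₃ _ hT
  obtain ⟨k, rfl⟩ := Triangle.coyoneda_exact₁ _ hT m (hrig hd' hd _)
  obtain ⟨l, rfl⟩ := hf hd' k
  show (l ≫ f) ≫ c = 0
  rw [Category.assoc, hfc, comp_zero]

lemma Rigid.mem_leftPerpOfShiftOne_of_distTriang {D : Set C} (hrig : Rigid D) {X d Y : C}
    {f : X ⟶ d} {g : d ⟶ Y} {h : Y ⟶ X⟦(1 : ℤ)⟧} (hT : Triangle.mk f g h ∈ distTriang C)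
    (hd : d ∈ D) (hf : LeftApprox D f) : Y ∈ leftPerpOfShiftOne D := by
  intro d' hd' m
  have hhf : h ≫ f⟦(1 : ℤ)⟧' = 0 := comp_distTriang_mor_zero₃₁ _ hT
  obtain ⟨n, rfl⟩ := Triangle.yoneda_exact₃ _ hT m (hrig hd hd' _)
  obtain ⟨n', rfl⟩ := (shiftFunctor C (1 : ℤ)).map_surjective n
  obtain ⟨k, rfl⟩ := hf hd' n'
  show h ≫ (f ≫ k)⟦(1 : ℤ)⟧' = 0
  rw [Functor.map_comp, ← Category.assoc, hhf, zero_comp]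

lemma Rigid.hasConeTriangles {D : Set C} (hrig : Rigid D)
    (hright : ∀ X : C, ∃ d ∈ D, ∃ f : d ⟶ X, RightApprox D f) :
    HasConeTriangles D (perpOfShiftNegOne D) := by
  intro X
  obtain ⟨d, hd, f, hf⟩ := hright X
  obtain ⟨K, a, c, hT⟩ := distinguished_cocone_triangle₁ f
  exact ⟨K, hrig.mem_perpOfShiftNegOne_of_distTriang hT hd hf, d, hd, a, f, c, hT⟩

lemma Rigid.hasCoconeTriangles {D : Set C} (hrig : Rigid D)
    (hleft : ∀ X : C, ∃ d ∈ D, ∃ f : X ⟶ d, LeftApprox D f) :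
    HasCoconeTriangles (leftPerpOfShiftOne D) D := by
  intro X
  obtain ⟨d, hd, f, hf⟩ := hleft X
  obtain ⟨Y, g, h, hT⟩ := distinguished_cocone_triangle f
  exact ⟨d, hd, Y, hrig.mem_leftPerpOfShiftOne_of_distTriang hT hd hf, f, g, h, hT⟩

/-- If `D` is a functorially finite rigid subcategory of a triangulated
category `C`, then `((D, D[-1]^⊥), (^⊥(D[1]), D))` is a twin cotorsion pair which is
concentric: `D ∩ D[-1]^⊥ = ^⊥(D[1]) ∩ D = D`. -/
theorem statement0 (D : Set C) (hsum : ClosedSummands D) (hrig : Rigid D)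
    (hff : FunctoriallyFinite D) :
    CotorsionPair D (perpOfShiftNegOne D) ∧
    CotorsionPair (leftPerpOfShiftOne D) D ∧
    D ⊆ leftPerpOfShiftOne D ∧
    D ∩ perpOfShiftNegOne D = D ∧
    leftPerpOfShiftOne D ∩ D = D := by
  obtain ⟨hright, hleft⟩ := hff
  have hcone := hrig.hasConeTriangles hright
  have hcocone := hrig.hasCoconeTriangles hleft
  refine ⟨⟨hsum, closedSummands_perpOfShiftNegOne D,
      fun _ _ hu hv => mem_perpOfShiftNegOne_iff.1 hv hu, hcone, hcone.hasCoconeTriangles⟩,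
    ⟨closedSummands_leftPerpOfShiftOne D, hsum, fun _ _ hu hv => hu hv,
      hcocone.hasConeTriangles, hcocone⟩,
    hrig.subset_leftPerpOfShiftOne, Set.inter_eq_left.2 hrig.subset_perpOfShiftNegOne,
    Set.inter_eq_right.2 hrig.subset_leftPerpOfShiftOne⟩

end Stmt0
end

section
/- Let C be a triangulated category, D a functorially finite rigid subcategory, and X an object with Hom(D[-1], X) = 0 (equivalently X ∈ D[-1]^⊥). Complete a left D-approximation i : X → D_X to a triangle X → D_X → X⟨1⟩ → X[1]. Then X⟨1⟩ ∈ ^⊥(D[1]), and the assignment X ↦ X⟨1⟩ induces an equivalence of additive quotient categories ⟨1⟩ : D[-1]^⊥/[D] → ^⊥(D[1])/[D], where [D] denotes the ideal of morphisms factoring through D. -/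
/-!
Write `X ⟶ D_X ⟶ X⟨1⟩ ⟶ X⟦1⟧` (connecting morphism `δ_X`) for a triangle on a left
`D`-approximation `ι`. By rigidity every map `X⟨1⟩ ⟶ d⟦1⟧` factors through `δ_X`, hence
through `δ_X ≫ ι⟦1⟧ = 0`, as `ι` is a left approximation.
A map `u : X ⟶ Y` extends to a morphism of triangles whose third component `w` satisfies
`δ_X ≫ u⟦1⟧ = w ≫ δ_Y`. Since `ι` is a left approximation, `u` factors through `D` iff
`δ_X ≫ u⟦1⟧ = 0`; for `Y ∈ D[-1]^⊥` (i.e. `Hom(D, Y⟦1⟧) = 0`), `w` factors through `D` iff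
`w ≫ δ_Y = 0`. The commuting square therefore makes `⟨1⟩` well defined and faithful on the
quotients, and `Hom(D_X, Y⟦1⟧) = 0` lets every `w ≫ δ_Y` be lifted along `δ_X`, which gives
fullness. Finally, for `W ∈ ^⊥(D[1])` the triangle on a right `D`-approximation `D_W ⟶ W`,
rotated back, is an approximation triangle of an object of `D[-1]^⊥` with cone `W`.
-/

open CategoryTheory CategoryTheory.Limits CategoryTheory.Pretriangulated

universe v u

namespace Stmt1

variable {C : Type u} [Category.{v} C] [Preadditive C] [HasZeroObject C] [HasShift C ℤ]
  [∀ n : ℤ, (shiftFunctor C n).Additive] [Pretriangulated C]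

def ClosedSummands (D : Set C) : Prop :=
  ∀ ⦃X Y : C⦄, X ∈ D → ∀ (i : Y ⟶ X) (p : X ⟶ Y), i ≫ p = 𝟙 Y → Y ∈ D

def Rigid (D : Set C) : Prop :=
  ∀ ⦃d d' : C⦄, d ∈ D → d' ∈ D → ∀ f : d ⟶ d'⟦(1 : ℤ)⟧, f = 0

def RightApprox (D : Set C) {d X : C} (f : d ⟶ X) : Prop :=
  ∀ ⦃d' : C⦄, d' ∈ D → ∀ g : d' ⟶ X, ∃ h : d' ⟶ d, h ≫ f = g

def LeftApprox (D : Set C) {X d : C} (f : X ⟶ d) : Prop :=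
  ∀ ⦃d' : C⦄, d' ∈ D → ∀ g : X ⟶ d', ∃ h : d ⟶ d', f ≫ h = g

def FunctoriallyFinite (D : Set C) : Prop :=
  (∀ X : C, ∃ d ∈ D, ∃ f : d ⟶ X, RightApprox D f) ∧
  (∀ X : C, ∃ d ∈ D, ∃ f : X ⟶ d, LeftApprox D f)

def perpOfShiftNegOne (D : Set C) : Set C :=
  {X | ∀ ⦃d : C⦄, d ∈ D → ∀ f : d⟦(-1 : ℤ)⟧ ⟶ X, f = 0}

def leftPerpOfShiftOne (D : Set C) : Set C :=
  {X | ∀ ⦃d : C⦄, d ∈ D → ∀ f : X ⟶ d⟦(1 : ℤ)⟧, f = 0}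

/-- `f` factors through an object of `I`. -/
def FactorsThru (I : Set C) {X Y : C} (f : X ⟶ Y) : Prop :=
  ∃ (W : C) (_ : W ∈ I) (p : X ⟶ W) (q : W ⟶ Y), f = p ≫ q

/-- The relation on a full subcategory identifying morphisms whose difference factors
through an object of `I`; the quotient is the additive quotient by the ideal `[I]`. -/
def idealRel (I Z : Set C) : HomRel (ObjectProperty.FullSubcategory (· ∈ Z)) :=
  fun {X Y} f g => FactorsThru I ((f.hom : X.obj ⟶ Y.obj) - (g.hom : X.obj ⟶ Y.obj))

/-- The additive quotient `Z/[I]`. -/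
abbrev IdealQuotient (I Z : Set C) := CategoryTheory.Quotient (idealRel I Z)

section

omit [HasZeroObject C] [HasShift C ℤ] [∀ n : ℤ, (shiftFunctor C n).Additive] [Pretriangulated C]

variable {D : Set C}

lemma factorsThru_zero (hff : FunctoriallyFinite D) {X Y : C} :
    FactorsThru D (0 : X ⟶ Y) := by
  obtain ⟨d, hd, -⟩ := hff.2 X
  exact ⟨d, hd, 0, 0, by simp⟩

lemma FactorsThru.neg {X Y : C} {f : X ⟶ Y} (hf : FactorsThru D f) : FactorsThru D (-f) := by
  obtain ⟨e, he, a, b, rfl⟩ := hf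
  exact ⟨e, he, -a, b, by simp⟩

omit [Preadditive C] in
lemma FactorsThru.precomp {X Y Z : C} {f : Y ⟶ Z} (hf : FactorsThru D f) (g : X ⟶ Y) :
    FactorsThru D (g ≫ f) := by
  obtain ⟨e, he, a, b, rfl⟩ := hf
  exact ⟨e, he, g ≫ a, b, by simp⟩

omit [Preadditive C] in
lemma FactorsThru.postcomp {X Y Z : C} {f : X ⟶ Y} (hf : FactorsThru D f) (g : Y ⟶ Z) :
    FactorsThru D (f ≫ g) := by
  obtain ⟨e, he, a, b, rfl⟩ := hf
  exact ⟨e, he, a, b ≫ g, by simp⟩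

end

section

variable {D : Set C}

omit [HasZeroObject C] [∀ n : ℤ, (shiftFunctor C n).Additive] [Pretriangulated C] in
lemma mem_perpOfShiftNegOne_iff {X : C} :
    X ∈ perpOfShiftNegOne D ↔ ∀ ⦃d : C⦄, d ∈ D → ∀ f : d ⟶ X⟦(1 : ℤ)⟧, f = 0 := by
  refine forall₂_congr fun d _ => ?_
  rw [← subsingleton_iff_forall_eq 0, ← subsingleton_iff_forall_eq 0]
  exact ((shiftEquiv' C (-1 : ℤ) 1 (by norm_num)).toAdjunction.homEquiv d X).subsingleton_congr

lemma biprod_mem (hsum : ClosedSummands D) (hff : FunctoriallyFinite D)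
    {d₁ d₂ : C} (h₁ : d₁ ∈ D) (h₂ : d₂ ∈ D) : (d₁ ⊞ d₂) ∈ D := by
  obtain ⟨e, he, j, hj⟩ := hff.2 (d₁ ⊞ d₂)
  obtain ⟨r₁, hr₁⟩ := hj h₁ biprod.fst
  obtain ⟨r₂, hr₂⟩ := hj h₂ biprod.snd
  refine hsum he j (r₁ ≫ biprod.inl + r₂ ≫ biprod.inr) ?_
  rw [Preadditive.comp_add, reassoc_of% hr₁, reassoc_of% hr₂, biprod.total]

lemma FactorsThru.add (hsum : ClosedSummands D) (hff : FunctoriallyFinite D)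
    {X Y : C} {f g : X ⟶ Y} (hf : FactorsThru D f) (hg : FactorsThru D g) :
    FactorsThru D (f + g) := by
  obtain ⟨e₁, he₁, a₁, b₁, rfl⟩ := hf
  obtain ⟨e₂, he₂, a₂, b₂, rfl⟩ := hg
  exact ⟨e₁ ⊞ e₂, biprod_mem hsum hff he₁ he₂, biprod.lift a₁ a₂, biprod.desc b₁ b₂, by simp⟩

lemma congruence_idealRel (hsum : ClosedSummands D) (hff : FunctoriallyFinite D) (Z : Set C) :
    Congruence (idealRel D Z) where
  comp_left f g g' h := by
    simpa only [idealRel, ObjectProperty.FullSubcategory.comp_hom, Preadditive.comp_sub]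
      using h.precomp f.hom
  comp_right g h := by
    simpa only [idealRel, ObjectProperty.FullSubcategory.comp_hom, Preadditive.sub_comp]
      using h.postcomp g.hom
  equivalence :=
    { refl _ := by simpa only [idealRel, sub_self] using factorsThru_zero hff
      symm h := by simpa only [idealRel, neg_sub] using h.neg
      trans h₁ h₂ := by simpa only [idealRel, sub_add_sub_cancel] using h₁.add hsum hff h₂ }

end

lemma _root_.CategoryTheory.Pretriangulated.Triangle.yoneda_exact₁ (T : Triangle C)
    (hT : T ∈ distTriang C) {A : C} (f : T.obj₁ ⟶ A) (hf : T.mor₃ ≫ f⟦(1 : ℤ)⟧' = 0) :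
    ∃ g : T.obj₂ ⟶ A, f = T.mor₁ ≫ g := by
  obtain ⟨g, hg⟩ := Triangle.yoneda_exact₃ _ (rot_of_distTriang _ hT) _ hf
  obtain ⟨g, rfl⟩ := (shiftFunctor C (1 : ℤ)).map_surjective (X := T.obj₂) (Y := A) g
  refine ⟨-g, (shiftFunctor C (1 : ℤ)).map_injective ?_⟩
  rw [Functor.map_comp, Functor.map_neg, Preadditive.comp_neg, ← Preadditive.neg_comp]
  exact hg

/-- A triangle `X ⟶ D_X ⟶ X⟨1⟩ ⟶ X⟦1⟧` on a left `D`-approximation of `X`. -/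
structure LeftApproxTriangle (D : Set C) (X : C) where
  obj : C
  mem : obj ∈ D
  ι : X ⟶ obj
  leftApprox : LeftApprox D ι
  cone : C
  π : obj ⟶ cone
  δ : cone ⟶ X⟦(1 : ℤ)⟧
  distinguished : Triangle.mk ι π δ ∈ distTriang C

namespace LeftApproxTriangle

variable {D : Set C} {X Y Z : C}

lemma nonempty (hff : FunctoriallyFinite D) (X : C) : Nonempty (LeftApproxTriangle D X) := by
  obtain ⟨d, hd, ι, hι⟩ := hff.2 X
  obtain ⟨W, π, δ, hT⟩ := distinguished_cocone_triangle ι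
  exact ⟨⟨d, hd, ι, hι, W, π, δ, hT⟩⟩

variable (T : LeftApproxTriangle D X)

lemma δ_comp_shift_ι : T.δ ≫ T.ι⟦(1 : ℤ)⟧' = 0 :=
  comp_distTriang_mor_zero₃₁ _ T.distinguished

lemma cone_mem (hrig : Rigid D) : T.cone ∈ leftPerpOfShiftOne D := by
  intro d hd f
  obtain ⟨g, rfl⟩ := Triangle.yoneda_exact₃ _ T.distinguished f (hrig T.mem hd _)
  obtain ⟨g, rfl⟩ := (shiftFunctor C (1 : ℤ)).map_surjective (X := X) (Y := d) g
  obtain ⟨k, rfl⟩ := T.leftApprox hd g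
  change T.δ ≫ (T.ι ≫ k)⟦(1 : ℤ)⟧' = 0
  rw [Functor.map_comp, reassoc_of% T.δ_comp_shift_ι, zero_comp]

lemma factorsThru_iff_δ_comp_shift_eq_zero (u : X ⟶ Y) :
    FactorsThru D u ↔ T.δ ≫ u⟦(1 : ℤ)⟧' = 0 := by
  constructor
  · rintro ⟨e, he, a, b, rfl⟩
    obtain ⟨a, rfl⟩ := T.leftApprox he a
    simp only [Functor.map_comp, Category.assoc, reassoc_of% T.δ_comp_shift_ι, zero_comp]
  · intro hu
    obtain ⟨g, hg⟩ := Triangle.yoneda_exact₁ _ T.distinguished u hu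
    exact ⟨T.obj, T.mem, T.ι, g, hg⟩

lemma factorsThru_of_comp_δ_eq_zero (w : Z ⟶ T.cone) (hw : w ≫ T.δ = 0) :
    FactorsThru D w := by
  obtain ⟨g, hg⟩ := Triangle.coyoneda_exact₃ _ T.distinguished w hw
  exact ⟨T.obj, T.mem, g, T.π, hg⟩

lemma factorsThru_iff_comp_δ_eq_zero (hX : X ∈ perpOfShiftNegOne D) (w : Z ⟶ T.cone) :
    FactorsThru D w ↔ w ≫ T.δ = 0 := by
  refine ⟨?_, T.factorsThru_of_comp_δ_eq_zero w⟩
  rintro ⟨e, he, a, b, rfl⟩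
  rw [Category.assoc, mem_perpOfShiftNegOne_iff.mp hX he (b ≫ T.δ), comp_zero]

lemma exists_comm (T' : LeftApproxTriangle D Y) (u : X ⟶ Y) :
    ∃ w : T.cone ⟶ T'.cone, T.δ ≫ u⟦(1 : ℤ)⟧' = w ≫ T'.δ := by
  obtain ⟨v, hv⟩ := T.leftApprox T'.mem (u ≫ T'.ι)
  obtain ⟨w, -, hw⟩ :=
    complete_distinguished_triangle_morphism _ _ T.distinguished T'.distinguished u v hv
  exact ⟨w, hw⟩

lemma exists_comm_of_mem (T' : LeftApproxTriangle D Y) (hY : Y ∈ perpOfShiftNegOne D)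
    (w : T.cone ⟶ T'.cone) : ∃ u : X ⟶ Y, T.δ ≫ u⟦(1 : ℤ)⟧' = w ≫ T'.δ := by
  obtain ⟨g, hg⟩ := Triangle.yoneda_exact₃ _ T.distinguished (w ≫ T'.δ)
    (mem_perpOfShiftNegOne_iff.mp hY T.mem _)
  obtain ⟨u, rfl⟩ := (shiftFunctor C (1 : ℤ)).map_surjective g
  exact ⟨u, hg.symm⟩

lemma factorsThru_sub_of_comm {T' : LeftApproxTriangle D Y} {u : X ⟶ Y}
    {w w' : T.cone ⟶ T'.cone} (hw : T.δ ≫ u⟦(1 : ℤ)⟧' = w ≫ T'.δ)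
    (hw' : T.δ ≫ u⟦(1 : ℤ)⟧' = w' ≫ T'.δ) : FactorsThru D (w - w') :=
  T'.factorsThru_of_comp_δ_eq_zero _ (by rw [Preadditive.sub_comp, ← hw, ← hw', sub_self])

lemma factorsThru_sub_iff_of_comm {T' : LeftApproxTriangle D Y} (hY : Y ∈ perpOfShiftNegOne D)
    {u u' : X ⟶ Y} {w w' : T.cone ⟶ T'.cone} (hw : T.δ ≫ u⟦(1 : ℤ)⟧' = w ≫ T'.δ)
    (hw' : T.δ ≫ u'⟦(1 : ℤ)⟧' = w' ≫ T'.δ) :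
    FactorsThru D (u - u') ↔ FactorsThru D (w - w') := by
  rw [T.factorsThru_iff_δ_comp_shift_eq_zero, T'.factorsThru_iff_comp_δ_eq_zero hY,
    Functor.map_sub, Preadditive.comp_sub, Preadditive.sub_comp, hw, hw']

lemma exists_cone_eq (hrig : Rigid D) (hff : FunctoriallyFinite D) {W : C}
    (hW : W ∈ leftPerpOfShiftOne D) :
    ∃ X ∈ perpOfShiftNegOne D, ∃ T : LeftApproxTriangle D X, T.cone = W := by
  obtain ⟨d, hd, q, hq⟩ := hff.1 W
  obtain ⟨X, ι, δ, hT⟩ := distinguished_cocone_triangle₁ q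
  refine ⟨X, mem_perpOfShiftNegOne_iff.mpr fun e he f => ?_,
    ⟨d, hd, ι, fun e he f => ?_, W, q, δ, hT⟩, rfl⟩
  · obtain ⟨g, rfl⟩ := Triangle.coyoneda_exact₁ _ hT f (hrig he hd _)
    obtain ⟨t, rfl⟩ := hq he g
    change (t ≫ q) ≫ δ = 0
    rw [Category.assoc, show q ≫ δ = 0 from comp_distTriang_mor_zero₂₃ _ hT, comp_zero]
  · obtain ⟨t, ht⟩ := Triangle.yoneda_exact₁ _ hT f (hW he _)
    exact ⟨t, ht.symm⟩

noncomputable def coneMap (T' : LeftApproxTriangle D Y) (u : X ⟶ Y) : T.cone ⟶ T'.cone :=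
  (T.exists_comm T' u).choose

lemma coneMap_comm (T' : LeftApproxTriangle D Y) (u : X ⟶ Y) :
    T.δ ≫ u⟦(1 : ℤ)⟧' = T.coneMap T' u ≫ T'.δ :=
  (T.exists_comm T' u).choose_spec

lemma coneMap_comp_comm (T' : LeftApproxTriangle D Y) (T'' : LeftApproxTriangle D Z)
    (u : X ⟶ Y) (v : Y ⟶ Z) :
    T.δ ≫ (u ≫ v)⟦(1 : ℤ)⟧' = (T.coneMap T' u ≫ T'.coneMap T'' v) ≫ T''.δ := by
  rw [Functor.map_comp, reassoc_of% T.coneMap_comm T' u, T'.coneMap_comm T'' v, Category.assoc]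

abbrev quotientCone (hrig : Rigid D) : IdealQuotient D (leftPerpOfShiftOne D) :=
  (Quotient.functor _).obj ⟨T.cone, T.cone_mem hrig⟩

abbrev quotientConeMap (hrig : Rigid D) {T' : LeftApproxTriangle D Y} (w : T.cone ⟶ T'.cone) :
    T.quotientCone hrig ⟶ T'.quotientCone hrig :=
  (Quotient.functor _).map (ObjectProperty.homMk w)

lemma quotientConeMap_id (hrig : Rigid D) : T.quotientConeMap hrig (𝟙 T.cone) = 𝟙 _ :=
  (Quotient.functor _).map_id _

lemma quotientConeMap_comp (hrig : Rigid D) {T' : LeftApproxTriangle D Y}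
    {T'' : LeftApproxTriangle D Z} (w : T.cone ⟶ T'.cone) (w' : T'.cone ⟶ T''.cone) :
    T.quotientConeMap hrig (w ≫ w') = T.quotientConeMap hrig w ≫ T'.quotientConeMap hrig w' := by
  rw [← Functor.map_comp]; rfl

lemma quotientConeMap_eq_of_comm (hrig : Rigid D) {T' : LeftApproxTriangle D Y} {u : X ⟶ Y}
    {w w' : T.cone ⟶ T'.cone} (hw : T.δ ≫ u⟦(1 : ℤ)⟧' = w ≫ T'.δ)
    (hw' : T.δ ≫ u⟦(1 : ℤ)⟧' = w' ≫ T'.δ) :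
    T.quotientConeMap hrig w = T.quotientConeMap hrig w' :=
  CategoryTheory.Quotient.sound _ (T.factorsThru_sub_of_comm hw hw')

lemma quotientConeMap_coneMap_id (hrig : Rigid D) :
    T.quotientConeMap hrig (T.coneMap T (𝟙 X)) = 𝟙 _ :=
  (T.quotientConeMap_eq_of_comm hrig (T.coneMap_comm T (𝟙 X)) (by simp)).trans
    (T.quotientConeMap_id hrig)

lemma quotientConeMap_coneMap_comp (hrig : Rigid D) (T' : LeftApproxTriangle D Y)
    (T'' : LeftApproxTriangle D Z) (u : X ⟶ Y) (v : Y ⟶ Z) :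
    T.quotientConeMap hrig (T.coneMap T'' (u ≫ v)) =
      T.quotientConeMap hrig (T.coneMap T' u) ≫ T'.quotientConeMap hrig (T'.coneMap T'' v) :=
  (T.quotientConeMap_eq_of_comm hrig (T.coneMap_comm T'' _) (T.coneMap_comp_comm T' T'' u v)).trans
    (T.quotientConeMap_comp hrig _ _)

noncomputable def quotientConeIso (hrig : Rigid D) (T' : LeftApproxTriangle D X) :
    T.quotientCone hrig ≅ T'.quotientCone hrig where
  hom := T.quotientConeMap hrig (T.coneMap T' (𝟙 X))
  inv := T'.quotientConeMap hrig (T'.coneMap T (𝟙 X))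
  hom_inv_id := by
    rw [← quotientConeMap_coneMap_comp, Category.comp_id, quotientConeMap_coneMap_id]
  inv_hom_id := by
    rw [← quotientConeMap_coneMap_comp, Category.comp_id, quotientConeMap_coneMap_id]

end LeftApproxTriangle

section ConeFunctor

variable {D : Set C} (hrig : Rigid D) (hff : FunctoriallyFinite D)

noncomputable def LeftApproxTriangle.choice (X : C) : LeftApproxTriangle D X :=
  (LeftApproxTriangle.nonempty hff X).some

open LeftApproxTriangle

noncomputable def coneFunctor :
    ObjectProperty.FullSubcategory (· ∈ perpOfShiftNegOne D) ⥤
      IdealQuotient D (leftPerpOfShiftOne D) where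
  obj X := (choice hff X.obj).quotientCone hrig
  map u := quotientConeMap _ hrig (coneMap _ _ u.hom)
  map_id _ := quotientConeMap_coneMap_id _ hrig
  map_comp u v := quotientConeMap_coneMap_comp _ hrig _ _ u.hom v.hom

lemma idealRel_iff_factorsThru_sub_coneMap
    {X Y : ObjectProperty.FullSubcategory (· ∈ perpOfShiftNegOne D)} (u u' : X ⟶ Y) :
    idealRel D _ u u' ↔ FactorsThru D ((choice hff X.obj).coneMap (choice hff Y.obj) u.hom -
      (choice hff X.obj).coneMap (choice hff Y.obj) u'.hom) :=
  factorsThru_sub_iff_of_comm _ Y.property (coneMap_comm _ _ _) (coneMap_comm _ _ _)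

noncomputable def coneQuotientFunctor :
    IdealQuotient D (perpOfShiftNegOne D) ⥤ IdealQuotient D (leftPerpOfShiftOne D) :=
  CategoryTheory.Quotient.lift _ (coneFunctor hrig hff) fun _ _ u u' h =>
    CategoryTheory.Quotient.sound _ ((idealRel_iff_factorsThru_sub_coneMap hff u u').mp h)

lemma coneQuotientFunctor_faithful (hsum : ClosedSummands D) :
    (coneQuotientFunctor hrig hff).Faithful where
  map_injective {X Y} f g hfg := by
    have := congruence_idealRel hsum hff (leftPerpOfShiftOne D)
    obtain ⟨u⟩ := f
    obtain ⟨u'⟩ := g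
    exact CategoryTheory.Quotient.sound _ ((idealRel_iff_factorsThru_sub_coneMap hff u u').mpr
      ((CategoryTheory.Quotient.functor_map_eq_iff _ _ _).mp hfg))

lemma coneQuotientFunctor_full : (coneQuotientFunctor hrig hff).Full where
  map_surjective {X Y} f := by
    obtain ⟨w⟩ := f
    obtain ⟨u, hu⟩ := exists_comm_of_mem _ _ Y.as.property w.hom
    exact ⟨(Quotient.functor _).map (ObjectProperty.homMk u),
      CategoryTheory.Quotient.sound _ (factorsThru_sub_of_comm _ (coneMap_comm _ _ _) hu)⟩

lemma coneQuotientFunctor_essSurj : (coneQuotientFunctor hrig hff).EssSurj where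
  mem_essImage := by
    rintro ⟨⟨W, hW⟩⟩
    obtain ⟨X, hX, T, rfl⟩ := exists_cone_eq hrig hff hW
    exact ⟨(Quotient.functor _).obj ⟨X, hX⟩, ⟨quotientConeIso _ hrig T⟩⟩

end ConeFunctor

theorem statement1_general (D : Set C) (hsum : ClosedSummands D) (hrig : Rigid D)
    (hff : FunctoriallyFinite D)
    -- part 1 data: a triangle on a left `D`-approximation of `X ∈ D[-1]^⊥`
    (X : C)
    (DX : C) (hDX : DX ∈ D) (i : X ⟶ DX) (hi : LeftApprox D i)
    (W : C) (p : DX ⟶ W) (h : W ⟶ X⟦(1 : ℤ)⟧)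
    (hT : Triangle.mk i p h ∈ distTriang C) :
    -- part 1: the cone lies in `^⊥(D[1])`
    W ∈ leftPerpOfShiftOne D ∧
    -- part 2: `⟨1⟩` induces an equivalence `D[-1]^⊥/[D] ≃ ^⊥(D[1])/[D]`
    ∃ F : IdealQuotient D (perpOfShiftNegOne D) ⥤ IdealQuotient D (leftPerpOfShiftOne D),
      F.IsEquivalence ∧
      ∀ (X' : ObjectProperty.FullSubcategory (· ∈ perpOfShiftNegOne D))
        (DX' : C) (_ : DX' ∈ D) (i' : X'.obj ⟶ DX') (_ : LeftApprox D i')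
        (W' : C) (p' : DX' ⟶ W') (h' : W' ⟶ X'.obj⟦(1 : ℤ)⟧)
        (_ : Triangle.mk i' p' h' ∈ distTriang C) (hW' : W' ∈ leftPerpOfShiftOne D),
        Nonempty
          (F.obj ((Quotient.functor (idealRel D (perpOfShiftNegOne D))).obj X') ≅
            (Quotient.functor (idealRel D (leftPerpOfShiftOne D))).obj ⟨W', hW'⟩) := by
  refine ⟨LeftApproxTriangle.cone_mem ⟨DX, hDX, i, hi, W, p, h, hT⟩ hrig,
    coneQuotientFunctor hrig hff, ?_, ?_⟩
  · exact ⟨coneQuotientFunctor_faithful hrig hff hsum, coneQuotientFunctor_full hrig hff,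
      coneQuotientFunctor_essSurj hrig hff⟩
  · intro X' DX' hDX' i' hi' W' p' h' hT' _
    exact ⟨(LeftApproxTriangle.choice hff X'.obj).quotientConeIso hrig
      ⟨DX', hDX', i', hi', W', p', h', hT'⟩⟩

theorem statement1 (D : Set C) (hsum : ClosedSummands D) (hrig : Rigid D)
    (hff : FunctoriallyFinite D)
    -- part 1 data: a triangle on a left `D`-approximation of `X ∈ D[-1]^⊥`
    (X : C) (hX : X ∈ perpOfShiftNegOne D)
    (DX : C) (hDX : DX ∈ D) (i : X ⟶ DX) (hi : LeftApprox D i)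
    (W : C) (p : DX ⟶ W) (h : W ⟶ X⟦(1 : ℤ)⟧)
    (hT : Triangle.mk i p h ∈ distTriang C) :
    -- part 1: the cone lies in `^⊥(D[1])`
    W ∈ leftPerpOfShiftOne D ∧
    -- part 2: `⟨1⟩` induces an equivalence `D[-1]^⊥/[D] ≃ ^⊥(D[1])/[D]`
    ∃ F : IdealQuotient D (perpOfShiftNegOne D) ⥤ IdealQuotient D (leftPerpOfShiftOne D),
      F.IsEquivalence ∧
      ∀ (X' : ObjectProperty.FullSubcategory (· ∈ perpOfShiftNegOne D))
        (DX' : C) (_ : DX' ∈ D) (i' : X'.obj ⟶ DX') (_ : LeftApprox D i')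
        (W' : C) (p' : DX' ⟶ W') (h' : W' ⟶ X'.obj⟦(1 : ℤ)⟧)
        (_ : Triangle.mk i' p' h' ∈ distTriang C) (hW' : W' ∈ leftPerpOfShiftOne D),
        Nonempty
          (F.obj ((Quotient.functor (idealRel D (perpOfShiftNegOne D))).obj X') ≅
            (Quotient.functor (idealRel D (leftPerpOfShiftOne D))).obj ⟨W', hW'⟩) :=
  statement1_general D hsum hrig hff X DX hDX i hi W p h hT

end Stmt1
end

section
/- Let (C, E, s) be an extriangulated category and I a full additive subcategory that is strongly contravariantly finite in C (every object X admits a deflation I_X → X which is a right I-approximation). Then I equals the subcategory of projective objects for the relative extriangulated structure E_I, and (C, E_I, s|_{E_I}) has enough projectives. Here E_I(C,A) = {δ ∈ E(C,A) : the induced map δ∘- : Hom(I', C) → E(I', A) is zero for all I' ∈ I}. -/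
/-!
STATEMENT 4: If I is strongly contravariantly finite in an extriangulated category C,
then I equals the projectives of the relative structure E_I, and (C, E_I) has enough projectives.
-/

set_option linter.unusedSectionVars false

open CategoryTheory CategoryTheory.Limits Opposite

universe v u

variable (C : Type u) [Category.{v} C] [Preadditive C] [HasZeroObject C] [HasBinaryBiproducts C]

/-- An extriangulated category structure on `C` (Nakaoka–Palu): an additive bifunctor
`E : Cᵒᵖ × C ⥤ Ab` together with an additive realization of extensions by conflations,
subject to the axioms (ET1)–(ET4) and their duals.  The realization is encoded by the
predicate `conf f g δ` expressing that `X ⟶ Y ⟶ Z` realizes `δ ∈ E(Z, X)`. -/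
structure ETStruct where
  /-- the extension bifunctor (ET1) -/
  E : Cᵒᵖ ⥤ C ⥤ AddCommGrpCat.{v}
  /-- `E` is additive in the contravariant variable -/
  additive_op : E.Additive
  /-- `E` is additive in the covariant variable -/
  additive : ∀ Z : Cᵒᵖ, (E.obj Z).Additive
  /-- `conf f g δ` : the sequence `f, g` realizes the extension `δ` (it is an s-conflation) -/
  conf : ∀ ⦃X Y Z : C⦄, (X ⟶ Y) → (Y ⟶ Z) → ((E.obj (op Z)).obj X) → Prop
  /-- every extension is realized by some conflation (ET2) -/
  exists_real : ∀ ⦃X Z : C⦄ (δ : (E.obj (op Z)).obj X),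
      ∃ (Y : C) (f : X ⟶ Y) (g : Y ⟶ Z), conf f g δ
  comp_zero : ∀ ⦃X Y Z : C⦄ ⦃f : X ⟶ Y⦄ ⦃g : Y ⟶ Z⦄ ⦃δ : (E.obj (op Z)).obj X⦄,
      conf f g δ → f ≫ g = 0
  /-- realizations are well defined up to equivalence of three-term sequences -/
  conf_iso : ∀ ⦃X Y Y' Z : C⦄ ⦃f : X ⟶ Y⦄ ⦃g : Y ⟶ Z⦄ ⦃δ : (E.obj (op Z)).obj X⦄
      (e : Y ≅ Y'), conf f g δ → conf (f ≫ e.hom) (e.inv ≫ g) δ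
  /-- the realization is additive: `0` is realized by the split conflation -/
  conf_zero : ∀ (X Z : C), conf (biprod.inl : X ⟶ X ⊞ Z) (biprod.snd : X ⊞ Z ⟶ Z)
      (0 : (E.obj (op Z)).obj X)
  /-- conversely, a conflation realizing `0` splits -/
  split_of_zero : ∀ ⦃X Y Z : C⦄ ⦃f : X ⟶ Y⦄ ⦃g : Y ⟶ Z⦄,
      conf f g (0 : (E.obj (op Z)).obj X) → ∃ s : Z ⟶ Y, s ≫ g = 𝟙 Z
  /-- (ET3) -/
  et3 : ∀ ⦃X Y Z X' Y' Z' : C⦄ ⦃f : X ⟶ Y⦄ ⦃g : Y ⟶ Z⦄ ⦃δ : (E.obj (op Z)).obj X⦄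
      ⦃f' : X' ⟶ Y'⦄ ⦃g' : Y' ⟶ Z'⦄ ⦃δ' : (E.obj (op Z')).obj X'⦄
      (a : X ⟶ X') (b : Y ⟶ Y'), conf f g δ → conf f' g' δ' → f ≫ b = a ≫ f' →
      ∃ c : Z ⟶ Z', g ≫ c = b ≫ g' ∧
        (E.map c.op).app X' δ' = ((E.obj (op Z)).map a) δ
  /-- (ET3)ᵒᵖ -/
  et3op : ∀ ⦃X Y Z X' Y' Z' : C⦄ ⦃f : X ⟶ Y⦄ ⦃g : Y ⟶ Z⦄ ⦃δ : (E.obj (op Z)).obj X⦄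
      ⦃f' : X' ⟶ Y'⦄ ⦃g' : Y' ⟶ Z'⦄ ⦃δ' : (E.obj (op Z')).obj X'⦄
      (b : Y ⟶ Y') (c : Z ⟶ Z'), conf f g δ → conf f' g' δ' → g ≫ c = b ≫ g' →
      ∃ a : X ⟶ X', f ≫ b = a ≫ f' ∧
        (E.map c.op).app X' δ' = ((E.obj (op Z)).map a) δ
  /-- (ET4) -/
  et4 : ∀ ⦃X Y Z Cc Dd : C⦄ ⦃f : X ⟶ Y⦄ ⦃f' : Y ⟶ Cc⦄ ⦃δ : (E.obj (op Cc)).obj X⦄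
      ⦃g : Y ⟶ Z⦄ ⦃g' : Z ⟶ Dd⦄ ⦃ε : (E.obj (op Dd)).obj Y⦄,
      conf f f' δ → conf g g' ε →
      ∃ (Ee : C) (h' : Z ⟶ Ee) (δ' : (E.obj (op Ee)).obj X) (c : Cc ⟶ Ee) (d : Ee ⟶ Dd),
        conf (f ≫ g) h' δ' ∧ conf c d (((E.obj (op Dd)).map f') ε) ∧
        f' ≫ c = g ≫ h' ∧ h' ≫ d = g' ∧ (E.map c.op).app X δ' = δ
  /-- long-exact-sequence property: `δ` pulled back along `h` vanishes iff `h` lifts -/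
  pull_zero_iff : ∀ ⦃X Y Z : C⦄ ⦃f : X ⟶ Y⦄ ⦃g : Y ⟶ Z⦄ ⦃δ : (E.obj (op Z)).obj X⦄,
      conf f g δ → ∀ ⦃W : C⦄ (h : W ⟶ Z),
        ((E.map h.op).app X δ = 0 ↔ ∃ k : W ⟶ Y, k ≫ g = h)
  /-- long-exact-sequence property: `δ` pushed forward along `h` vanishes iff `h` extends -/
  push_zero_iff : ∀ ⦃X Y Z : C⦄ ⦃f : X ⟶ Y⦄ ⦃g : Y ⟶ Z⦄ ⦃δ : (E.obj (op Z)).obj X⦄,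
      conf f g δ → ∀ ⦃W : C⦄ (h : X ⟶ W),
        (((E.obj (op Z)).map h) δ = 0 ↔ ∃ k : Y ⟶ W, f ≫ k = h)

namespace ETStruct

variable {C}
variable (T : ETStruct C)

/-- The group of `E`-extensions of `Z` by `X`. -/
abbrev ext (Z X : C) : Type v := (T.E.obj (op Z)).obj X

/-- Push-forward `a · δ` of an extension along `a : X ⟶ X'`. -/
def push {X X' Z : C} (a : X ⟶ X') (δ : T.ext Z X) : T.ext Z X' :=
  ((T.E.obj (op Z)).map a) δ

/-- Pull-back `δ · b` of an extension along `b : Z' ⟶ Z`. -/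
def pull {Z' Z X : C} (b : Z' ⟶ Z) (δ : T.ext Z X) : T.ext Z' X :=
  ((T.E.map b.op).app X) δ

/-- `δ ∈ E_I(Z, X)`: `δ` pulls back to zero from every object of `I`. -/
def memDown (I : Set C) {Z X : C} (δ : T.ext Z X) : Prop :=
  ∀ ⦃W : C⦄, W ∈ I → ∀ f : W ⟶ Z, T.pull f δ = 0

/-- `δ ∈ E^I(Z, X)`: `δ` pushes forward to zero into every object of `I`. -/
def memUp (I : Set C) {Z X : C} (δ : T.ext Z X) : Prop :=
  ∀ ⦃W : C⦄, W ∈ I → ∀ g : X ⟶ W, T.push g δ = 0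

end ETStruct

/-- `f : d ⟶ X` is a right `D`-approximation. -/
def RightApprox (D : Set C) {d X : C} (f : d ⟶ X) : Prop :=
  ∀ ⦃d' : C⦄, d' ∈ D → ∀ g : d' ⟶ X, ∃ h : d' ⟶ d, h ≫ f = g

/-- `f : X ⟶ d` is a left `D`-approximation. -/
def LeftApprox (D : Set C) {X d : C} (f : X ⟶ d) : Prop :=
  ∀ ⦃d' : C⦄, d' ∈ D → ∀ g : X ⟶ d', ∃ h : d ⟶ d', f ≫ h = g

def ClosedSummands (D : Set C) : Prop :=
  ∀ ⦃X Y : C⦄, X ∈ D → ∀ (i : Y ⟶ X) (p : X ⟶ Y), i ≫ p = 𝟙 Y → Y ∈ D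

variable {C}

namespace ETStruct

variable (T : ETStruct C)

/-- `I` is strongly contravariantly finite in `Xc`: every `X ∈ Xc` admits a deflation
from an object of `I` which is a right `I`-approximation. -/
def StronglyContraFinite (I Xc : Set C) : Prop :=
  ∀ ⦃X : C⦄, X ∈ Xc → ∃ W ∈ I, ∃ p : W ⟶ X, RightApprox C I p ∧
    ∃ (X' : C) (i : X' ⟶ W) (δ : T.ext X X'), T.conf i p δ

/-- `I` is strongly covariantly finite in `Xc`: every `X ∈ Xc` admits an inflation
into an object of `I` which is a left `I`-approximation. -/
def StronglyCovFinite (I Xc : Set C) : Prop :=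
  ∀ ⦃X : C⦄, X ∈ Xc → ∃ W ∈ I, ∃ i : X ⟶ W, LeftApprox C I i ∧
    ∃ (Z : C) (p : W ⟶ Z) (δ : T.ext Z X), T.conf i p δ

/-- `Cone_P(A, B)`: objects `Z` admitting a conflation `A' ⟶ B' ⟶ Z` whose extension
class satisfies `P` (e.g. lies in `E^I` or `E_I`), with `A' ∈ A` and `B' ∈ B`. -/
def coneRel (P : ∀ ⦃Z X : C⦄, T.ext Z X → Prop) (A B : Set C) : Set C :=
  {Z | ∃ (A' B' : C) (_ : A' ∈ A) (_ : B' ∈ B) (f : A' ⟶ B') (g : B' ⟶ Z)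
      (δ : T.ext Z A'), T.conf f g δ ∧ P δ}

/-- `CoCone_P(A, B)`: objects `W` admitting a conflation `W ⟶ A' ⟶ B'` whose extension
class satisfies `P`, with `A' ∈ A` and `B' ∈ B`. -/
def coconeRel (P : ∀ ⦃Z X : C⦄, T.ext Z X → Prop) (A B : Set C) : Set C :=
  {W | ∃ (A' B' : C) (_ : A' ∈ A) (_ : B' ∈ B) (f : W ⟶ A') (g : A' ⟶ B')
      (δ : T.ext B' W), T.conf f g δ ∧ P δ}

/-- `E^I(A, B) = 0` (`A` in the contravariant slot). -/
def vanishUp (I A B : Set C) : Prop :=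
  ∀ ⦃Z X : C⦄, Z ∈ A → X ∈ B → ∀ δ : T.ext Z X, T.memUp I δ → δ = 0

/-- `E_I(A, B) = 0` (`A` in the contravariant slot). -/
def vanishDown (I A B : Set C) : Prop :=
  ∀ ⦃Z X : C⦄, Z ∈ A → X ∈ B → ∀ δ : T.ext Z X, T.memDown I δ → δ = 0

/-- `A` is closed under extensions in `(C, E^I)`. -/
def extClosedUp (I A : Set C) : Prop :=
  ∀ ⦃X Y Z : C⦄ ⦃f : X ⟶ Y⦄ ⦃g : Y ⟶ Z⦄ ⦃δ : T.ext Z X⦄,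
    T.conf f g δ → T.memUp I δ → X ∈ A → Z ∈ A → Y ∈ A

/-- `A` is closed under extensions in `(C, E_I)`. -/
def extClosedDown (I A : Set C) : Prop :=
  ∀ ⦃X Y Z : C⦄ ⦃f : X ⟶ Y⦄ ⦃g : Y ⟶ Z⦄ ⦃δ : T.ext Z X⦄,
    T.conf f g δ → T.memDown I δ → X ∈ A → Z ∈ A → Y ∈ A

/-- `Z⟨1⟩ = Cone_{E^I}(Z, I)`. -/
def shiftPlus (I Zc : Set C) : Set C := T.coneRel (fun _ _ δ => T.memUp I δ) Zc I

/-- `Z⟨-1⟩ = CoCone_{E_I}(I, Z)`. -/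
def shiftMinus (I Zc : Set C) : Set C := T.coconeRel (fun _ _ δ => T.memDown I δ) I Zc

/-- `Ũ = CoCone_{E^I}(Z, S)`. -/
def Utilde (I Sc Zc : Set C) : Set C := T.coconeRel (fun _ _ δ => T.memUp I δ) Zc Sc

/-- `T̃ = Cone_{E_I}(V, Z)`. -/
def Ttilde (I Zc Vc : Set C) : Set C := T.coneRel (fun _ _ δ => T.memDown I δ) Vc Zc

end ETStruct


namespace ETStruct

variable (T : ETStruct C) {I : Set C}

@[simp]
lemma pull_id {Z X : C} (δ : T.ext Z X) : T.pull (𝟙 Z) δ = δ := by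
  simp [pull]

lemma memDown_iff_rightApprox {X Y Z : C} {i : X ⟶ Y} {p : Y ⟶ Z} {δ : T.ext Z X}
    (h : T.conf i p δ) : T.memDown I δ ↔ RightApprox C I p :=
  forall₂_congr fun _ _ => forall_congr' fun f => T.pull_zero_iff h f

lemma eq_zero_of_memDown {P A : C} (hP : P ∈ I) {δ : T.ext P A} (hδ : T.memDown I δ) :
    δ = 0 := by
  simpa using hδ hP (𝟙 P)

lemma exists_memDown_conf_of_stronglyContraFinite (hscf : T.StronglyContraFinite I Set.univ)
    (X : C) : ∃ (P : C) (_ : P ∈ I) (X' : C) (f : X' ⟶ P) (g : P ⟶ X) (δ : T.ext X X'),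
      T.conf f g δ ∧ T.memDown I δ := by
  obtain ⟨P, hP, g, hg, X', f, δ, h⟩ := hscf (Set.mem_univ X)
  exact ⟨P, hP, X', f, g, δ, h, (T.memDown_iff_rightApprox h).2 hg⟩

lemma mem_of_conf_zero (hsum : ClosedSummands C I) {X Y Z : C} {f : X ⟶ Y} {g : Y ⟶ Z}
    (hY : Y ∈ I) (h : T.conf f g 0) : Z ∈ I := by
  obtain ⟨s, hs⟩ := T.split_of_zero h
  exact hsum hY s g hs

end ETStruct

theorem statement4 (T : ETStruct C) (I : Set C) (hsum : ClosedSummands C I)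
    (hscf : T.StronglyContraFinite I Set.univ) :
    -- `I` equals the class of `E_I`-projective objects
    (∀ P : C, P ∈ I ↔ ∀ (A : C) (δ : T.ext P A), T.memDown I δ → δ = 0) ∧
    -- `(C, E_I, s|_{E_I})` has enough projectives
    (∀ X : C, ∃ (P : C) (_ : P ∈ I) (X' : C) (f : X' ⟶ P) (g : P ⟶ X) (δ : T.ext X X'),
      T.conf f g δ ∧ T.memDown I δ) := by
  have enough := T.exists_memDown_conf_of_stronglyContraFinite hscf
  refine ⟨fun P => ⟨fun hP A δ => T.eq_zero_of_memDown hP, fun hproj => ?_⟩, enough⟩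
  obtain ⟨W, hW, X', f, g, δ, h, hδ⟩ := enough P
  obtain rfl := hproj X' δ hδ
  exact T.mem_of_conf_zero hsum hW h
end

section
/- Let (S, Z, V) be a premutation triple in an extriangulated category (C, E, s), and for U ∈ Ũ := CoCone_{E^I}(Z, S) take an s^I-triangle U →^{h} Z^U → S' --→ U with Z^U ∈ Z, S' ∈ S. Then precomposition with h induces a natural isomorphism Hom_{Z/[I]}(Z^U, Z') ≅ Hom_{Ũ/[I]}(U, Z') for every Z' ∈ Z. Consequently U ↦ Z^U extends to an additive functor σ : Ũ/[I] → Z/[I] which is left adjoint to the inclusion Z/[I] → Ũ/[I]. -/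
/-!
STATEMENT 9: adjoint functor σ for premutation triples.
-/

set_option linter.unusedSectionVars false

open CategoryTheory CategoryTheory.Limits Opposite

universe v u

variable (C : Type u) [Category.{v} C] [Preadditive C] [HasZeroObject C] [HasBinaryBiproducts C]

variable {C}

section IdealQuotient

/-- `f` factors through an object of `I`. -/
def FactorsThru (I : Set C) {X Y : C} (f : X ⟶ Y) : Prop :=
  ∃ (W : C) (_ : W ∈ I) (p : X ⟶ W) (q : W ⟶ Y), f = p ≫ q

/-- Morphisms of the full subcategory on `Z` are identified when their difference factors
through an object of `I`; the quotient is the additive quotient `Z/[I]`. -/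
def idealRel (I Z : Set C) : HomRel (ObjectProperty.FullSubcategory (· ∈ Z)) :=
  fun {X Y} f g => FactorsThru I (f.hom - g.hom)

/-- The additive quotient `Z/[I]`. -/
abbrev IdealQuotient (I Z : Set C) := CategoryTheory.Quotient (idealRel I Z)

variable {I : Set C}

theorem factorsThru_zero (hne : I.Nonempty) (X Y : C) : FactorsThru I (0 : X ⟶ Y) := by
  obtain ⟨W, hW⟩ := hne
  exact ⟨W, hW, 0, 0, by simp⟩

theorem factorsThru_neg {X Y : C} {f : X ⟶ Y} (h : FactorsThru I f) :
    FactorsThru I (-f) := by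
  obtain ⟨W, hW, p, q, rfl⟩ := h
  exact ⟨W, hW, -p, q, by simp⟩

theorem factorsThru_add (hbi : ∀ ⦃W W' : C⦄, W ∈ I → W' ∈ I → (W ⊞ W') ∈ I)
    {X Y : C} {f g : X ⟶ Y} (hf : FactorsThru I f) (hg : FactorsThru I g) :
    FactorsThru I (f + g) := by
  obtain ⟨W, hW, p, q, rfl⟩ := hf
  obtain ⟨W', hW', p', q', rfl⟩ := hg
  exact ⟨W ⊞ W', hbi hW hW', biprod.lift p p', biprod.desc q q', by simp⟩

theorem factorsThru_comp_left {X' X Y : C} (f : X' ⟶ X) {g : X ⟶ Y}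
    (hg : FactorsThru I g) : FactorsThru I (f ≫ g) := by
  obtain ⟨W, hW, p, q, rfl⟩ := hg
  exact ⟨W, hW, f ≫ p, q, by simp⟩

theorem factorsThru_comp_right {X Y Y' : C} {f : X ⟶ Y} (g : Y ⟶ Y')
    (hf : FactorsThru I f) : FactorsThru I (f ≫ g) := by
  obtain ⟨W, hW, p, q, rfl⟩ := hf
  exact ⟨W, hW, p, q ≫ g, by simp⟩

theorem idealRel_congruence (Z : Set C) (hne : I.Nonempty)
    (hbi : ∀ ⦃W W' : C⦄, W ∈ I → W' ∈ I → (W ⊞ W') ∈ I) :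
    Congruence (idealRel I Z) := by
  refine { equivalence := ?eqv, comp_left := ?cl, comp_right := ?cr }
  case eqv =>
    intro X Y
    constructor
    · intro f
      simpa [idealRel, sub_self] using factorsThru_zero hne X.obj Y.obj
    · intro f g h
      simpa [idealRel, neg_sub] using factorsThru_neg h
    · intro f g k hfg hgk
      have := factorsThru_add hbi hfg hgk
      simpa [idealRel, sub_add_sub_cancel] using this
  case cl =>
    intro X Y Z' f g g' h
    have := factorsThru_comp_left (I := I) f.hom h
    simpa [idealRel, Preadditive.comp_sub] using this
  case cr =>
    intro X Y Z' f f' g h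
    have := factorsThru_comp_right (I := I) g.hom h
    simpa [idealRel, Preadditive.sub_comp] using this

/-- The preadditive structure on the ideal quotient `Z/[I]`. -/
def quotPreadditive (Z : Set C) (hne : I.Nonempty)
    (hbi : ∀ ⦃W W' : C⦄, W ∈ I → W' ∈ I → (W ⊞ W') ∈ I) :
    Preadditive (IdealQuotient I Z) :=
  letI : Congruence (idealRel I Z) := idealRel_congruence Z hne hbi
  Quotient.preadditive (idealRel I Z) (by
    intro X Y f₁ f₂ g₁ g₂ h₁ h₂
    have := factorsThru_add hbi h₁ h₂
    change FactorsThru I ((f₁.hom + g₁.hom) - (f₂.hom + g₂.hom))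
    simpa [idealRel, add_sub_add_comm] using this)

/-- The inclusion functor `A/[I] ⥤ B/[I]` for `A ⊆ B`. -/
def idealInclusion (I A B : Set C) (hAB : A ⊆ B) :
    IdealQuotient I A ⥤ IdealQuotient I B :=
  CategoryTheory.Quotient.lift _
    (ObjectProperty.ιOfLE (fun _ hX => hAB hX) ⋙ CategoryTheory.Quotient.functor (idealRel I B))
    (fun _ _ _ _ h => CategoryTheory.Quotient.sound _ h)

end IdealQuotient

namespace ETStruct

variable (T : ETStruct C)

/-- A premutation triple `(S, Z, V)`: conditions (MT1) and (MT2), with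
`I = S ∩ Z = Z ∩ V` strongly functorially finite in `Z`. -/
structure IsPremutationTriple (Sc Zc Vc : Set C) : Prop where
  sumS : ClosedSummands C Sc
  sumZ : ClosedSummands C Zc
  sumV : ClosedSummands C Vc
  /-- (MT1): `S ∩ Z = Z ∩ V` -/
  inter_eq : Sc ∩ Zc = Zc ∩ Vc
  /-- (MT1): `I ⊆ Z` is strongly contravariantly finite -/
  strong_contra : T.StronglyContraFinite (Sc ∩ Zc) Zc
  /-- (MT1): `I ⊆ Z` is strongly covariantly finite -/
  strong_cov : T.StronglyCovFinite (Sc ∩ Zc) Zc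
  /-- (MT2)(i): `E^I(S, Z) = 0` -/
  mt2_i₁ : T.vanishUp (Sc ∩ Zc) Sc Zc
  /-- (MT2)(i): `E_I(S, Z⟨-1⟩) = 0` -/
  mt2_i₂ : T.vanishDown (Sc ∩ Zc) Sc (T.shiftMinus (Sc ∩ Zc) Zc)
  /-- (MT2)(ii): `E_I(Z, V) = 0` -/
  mt2_ii₁ : T.vanishDown (Sc ∩ Zc) Zc Vc
  /-- (MT2)(ii): `E^I(Z⟨1⟩, V) = 0` -/
  mt2_ii₂ : T.vanishUp (Sc ∩ Zc) (T.shiftPlus (Sc ∩ Zc) Zc) Vc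

/-- A mutation triple: a premutation triple which moreover satisfies (MT3). -/
structure IsMutationTriple (Sc Zc Vc : Set C) : Prop extends T.IsPremutationTriple Sc Zc Vc where
  /-- (MT3)(i): `Cone_{E^I}(Z, Z) ⊆ Ũ` -/
  mt3_i₁ : T.coneRel (fun _ _ δ => T.memUp (Sc ∩ Zc) δ) Zc Zc ⊆ T.Utilde (Sc ∩ Zc) Sc Zc
  /-- (MT3)(i): `CoCone_{E_I}(Z, Z) ⊆ T̃` -/
  mt3_i₂ : T.coconeRel (fun _ _ δ => T.memDown (Sc ∩ Zc) δ) Zc Zc ⊆ T.Ttilde (Sc ∩ Zc) Zc Vc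
  /-- (MT3)(ii): `S` is closed under `E^I`-extensions -/
  mt3_ii_S : T.extClosedUp (Sc ∩ Zc) Sc
  /-- (MT3)(ii): `Z` is closed under `E^I`-extensions -/
  mt3_ii_Zup : T.extClosedUp (Sc ∩ Zc) Zc
  /-- (MT3)(ii): `Z` is closed under `E_I`-extensions -/
  mt3_ii_Zdown : T.extClosedDown (Sc ∩ Zc) Zc
  /-- (MT3)(ii): `V` is closed under `E_I`-extensions -/
  mt3_ii_V : T.extClosedDown (Sc ∩ Zc) Vc

/-- A right mutation double `(S, Z)`: conditions (MT1), (RM2) and (RM3) (with `V := I`). -/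
structure IsRightMutationDouble (Sc Zc : Set C) : Prop where
  sumS : ClosedSummands C Sc
  sumZ : ClosedSummands C Zc
  strong_contra : T.StronglyContraFinite (Sc ∩ Zc) Zc
  strong_cov : T.StronglyCovFinite (Sc ∩ Zc) Zc
  /-- (RM2): `E^I(S, Z) = 0` -/
  rm2₁ : T.vanishUp (Sc ∩ Zc) Sc Zc
  /-- (RM2): `E_I(S, Z⟨-1⟩) = 0` -/
  rm2₂ : T.vanishDown (Sc ∩ Zc) Sc (T.shiftMinus (Sc ∩ Zc) Zc)
  /-- (RM3): `Cone_{E^I}(Z, Z) ⊆ Ũ` -/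
  rm3₁ : T.coneRel (fun _ _ δ => T.memUp (Sc ∩ Zc) δ) Zc Zc ⊆ T.Utilde (Sc ∩ Zc) Sc Zc
  /-- (RM3): `S` is closed under `E^I`-extensions -/
  rm3_S : T.extClosedUp (Sc ∩ Zc) Sc
  /-- (RM3): `Z` is closed under `E^I`-extensions -/
  rm3_Z : T.extClosedUp (Sc ∩ Zc) Zc

end ETStruct

/-!
A morphism `u : U ⟶ Z'` with `Z' ∈ Z` extends along `h`, since `u · ρ ∈ E^I(S', Z') = 0`.
The extension is unique modulo `[I]`: if `h ≫ z` factors through `I`, then up to a map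
through `I` we have `z = g ≫ c`, and the class `δ` of a deflation `W ⟶ Z'` that is a right
`I`-approximation pulls back along `c` into `E_I(S', Z⟨-1⟩) = 0`, so `z` lifts through `W`.
Hence `Z^U` corepresents `Hom_{Ũ/[I]}(U, -)` on `Z/[I]`, and objectwise corepresentability
gives the left adjoint.
-/

lemma factorsThru_sub_of_compClosure {I A : Set C}
    {X Y : ObjectProperty.FullSubcategory (· ∈ A)} {f g : X ⟶ Y}
    (hfg : HomRel.CompClosure (idealRel I A) f g) :
    FactorsThru I (f.hom - g.hom) := by
  cases hfg with | @intro _ _ _ _ a m₁ m₂ b hm =>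
  change FactorsThru I (a.hom ≫ m₁.hom ≫ b.hom - a.hom ≫ m₂.hom ≫ b.hom)
  rw [← Preadditive.comp_sub, ← Preadditive.sub_comp]
  exact factorsThru_comp_left a.hom (factorsThru_comp_right b.hom hm)

namespace ETStruct

section Extensions

variable (T : ETStruct C)

lemma pull_comp {Z'' Z' Z X : C} (a : Z'' ⟶ Z') (b : Z' ⟶ Z) (δ : T.ext Z X) :
    T.pull (a ≫ b) δ = T.pull a (T.pull b δ) := by
  simp [pull, op_comp]

lemma push_comp {X X' X'' Z : C} (a : X ⟶ X') (b : X' ⟶ X'') (δ : T.ext Z X) :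
    T.push (a ≫ b) δ = T.push b (T.push a δ) := by
  simp [push]

lemma pull_zero {Z' Z X : C} (a : Z' ⟶ Z) : T.pull a (0 : T.ext Z X) = 0 := by
  simp [pull]

lemma pull_add {Z' Z X : C} (a b : Z' ⟶ Z) (δ : T.ext Z X) :
    T.pull (a + b) δ = T.pull a δ + T.pull b δ := by
  have := T.additive_op
  simp [pull, op_add, Functor.map_add, NatTrans.app_add]

end Extensions

variable {T : ETStruct C} {I : Set C}

lemma memUp_push {Z X X' : C} {δ : T.ext Z X} (hδ : T.memUp I δ) (a : X ⟶ X') :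
    T.memUp I (T.push a δ) := by
  intro W hW t
  rw [← T.push_comp]
  exact hδ hW (a ≫ t)

lemma memDown_pull {Z Z' X : C} {δ : T.ext Z X} (hδ : T.memDown I δ) (a : Z' ⟶ Z) :
    T.memDown I (T.pull a δ) := by
  intro W hW t
  rw [← T.pull_comp]
  exact hδ hW (t ≫ a)

lemma memDown_of_rightApprox {X Y Z : C} {f : X ⟶ Y} {p : Y ⟶ Z} {δ : T.ext Z X}
    (hconf : T.conf f p δ) (hp : RightApprox C I p) : T.memDown I δ := by
  intro W hW t
  exact (T.pull_zero_iff hconf t).mpr (hp hW t)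

lemma exists_comp_eq_of_comp_eq_zero {X Y Z W : C} {f : X ⟶ Y} {g : Y ⟶ Z} {δ : T.ext Z X}
    (hconf : T.conf f g δ) (z : Y ⟶ W) (hz : f ≫ z = 0) : ∃ c : Z ⟶ W, g ≫ c = z := by
  obtain ⟨c, hc, -⟩ := T.et3 (0 : X ⟶ X) (z ≫ biprod.inr) hconf (T.conf_zero X W)
    (by rw [← Category.assoc, hz, zero_comp, zero_comp])
  exact ⟨c, by rw [hc, Category.assoc, biprod.inr_snd, Category.comp_id]⟩

lemma nonempty_of_stronglyContraFinite {Zc : Set C} (hsc : T.StronglyContraFinite I Zc)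
    {X : C} (hX : X ∈ Zc) : I.Nonempty := by
  obtain ⟨W, hW, -⟩ := hsc hX
  exact ⟨W, hW⟩

variable (T) in
/-- The `s^I`-triangles `U ⟶ Z^U ⟶ S' ⇢ U` witnessing `U ∈ Ũ`. -/
structure UtildeTriangle (I Sc Zc : Set C) (U : C) where
  Z : C
  S : C
  mem_Z : Z ∈ Zc
  mem_S : S ∈ Sc
  h : U ⟶ Z
  g : Z ⟶ S
  ρ : T.ext S U
  conf : T.conf h g ρ
  memUp_ρ : T.memUp I ρ

lemma nonempty_utildeTriangle {Sc Zc : Set C} {U : C} (hU : U ∈ T.Utilde I Sc Zc) :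
    Nonempty (T.UtildeTriangle I Sc Zc U) := by
  obtain ⟨Z, S, hZ, hS, h, g, ρ, hconf, hρ⟩ := hU
  exact ⟨⟨Z, S, hZ, hS, h, g, ρ, hconf, hρ⟩⟩

namespace UtildeTriangle

variable {Sc Zc : Set C} {U : C}

lemma mem_utilde (R : T.UtildeTriangle I Sc Zc U) : U ∈ T.Utilde I Sc Zc :=
  ⟨R.Z, R.S, R.mem_Z, R.mem_S, R.h, R.g, R.ρ, R.conf, R.memUp_ρ⟩

variable (R : T.UtildeTriangle I Sc Zc U)

lemma exists_h_comp_eq (hvan : T.vanishUp I Sc Zc) {Z' : C} (hZ' : Z' ∈ Zc) (u : U ⟶ Z') :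
    ∃ z : R.Z ⟶ Z', R.h ≫ z = u :=
  (T.push_zero_iff R.conf u).mp (hvan R.mem_S hZ' _ (memUp_push R.memUp_ρ u))

lemma factorsThru_of_factorsThru_h_comp (hsc : T.StronglyContraFinite I Zc)
    (hvan : T.vanishDown I Sc (T.shiftMinus I Zc)) {Z' : C} (hZ' : Z' ∈ Zc) {z : R.Z ⟶ Z'}
    (hz : FactorsThru I (R.h ≫ z)) : FactorsThru I z := by
  obtain ⟨W, hW, p, q, hpq⟩ := hz
  obtain ⟨k, hk⟩ := (T.push_zero_iff R.conf p).mp (R.memUp_ρ hW p)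
  obtain ⟨c, hc⟩ := exists_comp_eq_of_comp_eq_zero R.conf (z - k ≫ q) (by
    rw [Preadditive.comp_sub, ← Category.assoc, hk, ← hpq, sub_self])
  obtain ⟨W', hW', p', hp', K, i, δ, hconf⟩ := hsc hZ'
  have hδ : T.memDown I δ := memDown_of_rightApprox hconf hp'
  have hK : K ∈ T.shiftMinus I Zc := ⟨W', Z', hW', hZ', i, p', δ, hconf, hδ⟩
  have hzδ : T.pull z δ = 0 := by
    have hz : z = k ≫ q + R.g ≫ c := by rw [hc]; abel
    rw [hz, T.pull_add, T.pull_comp, T.pull_comp, hδ hW q,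
      hvan R.mem_S hK _ (memDown_pull hδ c), T.pull_zero, T.pull_zero, add_zero]
  obtain ⟨w, hw⟩ := (T.pull_zero_iff hconf z).mp hzδ
  exact ⟨W', hW', w, p', hw.symm⟩

lemma factorsThru_sub_of_h_comp_eq (hsc : T.StronglyContraFinite I Zc)
    (hvan : T.vanishDown I Sc (T.shiftMinus I Zc)) {Z' : C} (hZ' : Z' ∈ Zc)
    {z₁ z₂ : R.Z ⟶ Z'} (heq : R.h ≫ z₁ = R.h ≫ z₂) : FactorsThru I (z₁ - z₂) := by
  refine R.factorsThru_of_factorsThru_h_comp hsc hvan hZ' ?_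
  rw [Preadditive.comp_sub, heq, sub_self]
  exact factorsThru_zero (nonempty_of_stronglyContraFinite hsc hZ') _ _

noncomputable def extend (hvan : T.vanishUp I Sc Zc) {Z' : C} (hZ' : Z' ∈ Zc) (u : U ⟶ Z') :
    R.Z ⟶ Z' :=
  (R.exists_h_comp_eq hvan hZ' u).choose

@[simp]
lemma h_comp_extend (hvan : T.vanishUp I Sc Zc) {Z' : C} (hZ' : Z' ∈ Zc) (u : U ⟶ Z') :
    R.h ≫ R.extend hvan hZ' u = u :=
  (R.exists_h_comp_eq hvan hZ' u).choose_spec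

lemma factorsThru_extend_sub_extend (hvan₁ : T.vanishUp I Sc Zc)
    (hsc : T.StronglyContraFinite I Zc) (hvan₂ : T.vanishDown I Sc (T.shiftMinus I Zc))
    {Z' : C} (hZ' : Z' ∈ Zc) {u₁ u₂ : U ⟶ Z'} (hu : FactorsThru I (u₁ - u₂)) :
    FactorsThru I (R.extend hvan₁ hZ' u₁ - R.extend hvan₁ hZ' u₂) :=
  R.factorsThru_of_factorsThru_h_comp hsc hvan₂ hZ' <| by
    rwa [Preadditive.comp_sub, h_comp_extend, h_comp_extend]

noncomputable def homEquiv (hvan₁ : T.vanishUp I Sc Zc)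
    (hsc : T.StronglyContraFinite I Zc) (hvan₂ : T.vanishDown I Sc (T.shiftMinus I Zc))
    (hsub : Zc ⊆ T.Utilde I Sc Zc) (Y : IdealQuotient I Zc) :
    ((Quotient.functor _).obj ⟨R.Z, R.mem_Z⟩ ⟶ Y) ≃
      ((Quotient.functor _).obj ⟨U, R.mem_utilde⟩ ⟶ (idealInclusion I Zc _ hsub).obj Y) :=
  { toFun f := (Quotient.functor _).map
        (ObjectProperty.homMk R.h : (⟨U, R.mem_utilde⟩ : ObjectProperty.FullSubcategory _) ⟶
          ⟨R.Z, hsub R.mem_Z⟩) ≫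
      (idealInclusion I Zc _ hsub).map f
    invFun := Quot.lift
      (fun (u : (⟨U, R.mem_utilde⟩ : ObjectProperty.FullSubcategory _) ⟶
          ⟨Y.as.obj, hsub Y.as.property⟩) =>
        (Quotient.functor _).map
          (ObjectProperty.homMk (R.extend hvan₁ Y.as.property u.hom) :
            (⟨R.Z, R.mem_Z⟩ : ObjectProperty.FullSubcategory _) ⟶ Y.as))
      (fun _ _ hu => CategoryTheory.Quotient.sound _ <|
        R.factorsThru_extend_sub_extend hvan₁ hsc hvan₂ Y.as.property
          (factorsThru_sub_of_compClosure hu))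
    left_inv := by
      rintro ⟨z⟩
      exact CategoryTheory.Quotient.sound _ <| R.factorsThru_sub_of_h_comp_eq hsc hvan₂
        Y.as.property (R.h_comp_extend hvan₁ Y.as.property _)
    right_inv := by
      rintro ⟨u⟩
      exact congrArg (Quot.mk _) <|
        ObjectProperty.hom_ext _ (R.h_comp_extend hvan₁ Y.as.property _) }

lemma homEquiv_apply (hvan₁ : T.vanishUp I Sc Zc)
    (hsc : T.StronglyContraFinite I Zc) (hvan₂ : T.vanishDown I Sc (T.shiftMinus I Zc))
    (hsub : Zc ⊆ T.Utilde I Sc Zc) {Y : IdealQuotient I Zc}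
    (f : (Quotient.functor _).obj ⟨R.Z, R.mem_Z⟩ ⟶ Y) :
    R.homEquiv hvan₁ hsc hvan₂ hsub Y f =
      (Quotient.functor _).map
          (ObjectProperty.homMk R.h : (⟨U, R.mem_utilde⟩ : ObjectProperty.FullSubcategory _) ⟶
            ⟨R.Z, hsub R.mem_Z⟩) ≫
        (idealInclusion I Zc _ hsub).map f :=
  rfl

noncomputable def corepresentableBy (hvan₁ : T.vanishUp I Sc Zc)
    (hsc : T.StronglyContraFinite I Zc) (hvan₂ : T.vanishDown I Sc (T.shiftMinus I Zc))
    (hsub : Zc ⊆ T.Utilde I Sc Zc) :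
    (idealInclusion I Zc (T.Utilde I Sc Zc) hsub ⋙
        coyoneda.obj (op ((Quotient.functor _).obj ⟨U, R.mem_utilde⟩))).CorepresentableBy
      ((Quotient.functor _).obj ⟨R.Z, R.mem_Z⟩) where
  homEquiv {Y} := R.homEquiv hvan₁ hsc hvan₂ hsub Y
  homEquiv_comp g f := by
    rw [homEquiv_apply, homEquiv_apply, Functor.map_comp]
    exact (Category.assoc (obj := IdealQuotient I (T.Utilde I Sc Zc)) _ _ _).symm

end UtildeTriangle

variable {Sc Zc : Set C}

theorem isRightAdjoint_idealInclusion (hvan₁ : T.vanishUp I Sc Zc)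
    (hsc : T.StronglyContraFinite I Zc) (hvan₂ : T.vanishDown I Sc (T.shiftMinus I Zc))
    (hsub : Zc ⊆ T.Utilde I Sc Zc) :
    (idealInclusion I Zc (T.Utilde I Sc Zc) hsub).IsRightAdjoint := by
  refine Functor.isRightAdjoint_of_leftAdjointObjIsDefined_eq_top (top_unique ?_)
  rintro ⟨⟨U, hU⟩⟩ -
  obtain ⟨R⟩ := nonempty_utildeTriangle hU
  exact (R.corepresentableBy hvan₁ hsc hvan₂ hsub).isCorepresentable

end ETStruct

open ETStruct in
/-- For a premutation triple `(S, Z, V)` and `U ∈ Ũ` with a chosen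
s^I-triangle `U ⟶ Z^U ⟶ S' ⇢ U`, precomposition with `h : U ⟶ Z^U` induces a natural
isomorphism `Hom_{Z/[I]}(Z^U, Z') ≅ Hom_{Ũ/[I]}(U, Z')`; consequently `U ↦ Z^U` extends
to a functor `σ : Ũ/[I] ⥤ Z/[I]` left adjoint to the inclusion. -/
theorem statement9 (T : ETStruct C) (Sc Zc Vc : Set C)
    (hpm : T.IsPremutationTriple Sc Zc Vc)
    (hsub : Zc ⊆ T.Utilde (Sc ∩ Zc) Sc Zc)
    (U ZU S' : C) (hU : U ∈ T.Utilde (Sc ∩ Zc) Sc Zc) (hZU : ZU ∈ Zc) (hS' : S' ∈ Sc)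
    (h : U ⟶ ZU) (g : ZU ⟶ S') (ρ : T.ext S' U)
    (hconf : T.conf h g ρ) (hρ : T.memUp (Sc ∩ Zc) ρ) :
    -- precomposition with `h` is bijective on morphisms modulo `[I]`
    (∀ (Z' : C), Z' ∈ Zc →
      (∀ u : U ⟶ Z', ∃ z : ZU ⟶ Z', FactorsThru (Sc ∩ Zc) (u - h ≫ z)) ∧
      (∀ z : ZU ⟶ Z', FactorsThru (Sc ∩ Zc) (h ≫ z) → FactorsThru (Sc ∩ Zc) z)) ∧
    -- there is a left adjoint `σ` to the inclusion `Z/[I] ⥤ Ũ/[I]` with `σ(U) = Z^U`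
    (∃ σ : IdealQuotient (Sc ∩ Zc) (T.Utilde (Sc ∩ Zc) Sc Zc) ⥤ IdealQuotient (Sc ∩ Zc) Zc,
      Nonempty (σ ⊣ idealInclusion (Sc ∩ Zc) Zc (T.Utilde (Sc ∩ Zc) Sc Zc) hsub) ∧
      Nonempty (σ.obj ((CategoryTheory.Quotient.functor _).obj ⟨U, hU⟩) ≅
        (CategoryTheory.Quotient.functor _).obj ⟨ZU, hZU⟩)) := by
  have hsc := hpm.strong_contra
  have hvan₁ := hpm.mt2_i₁
  have hvan₂ := hpm.mt2_i₂
  let R : T.UtildeTriangle (Sc ∩ Zc) Sc Zc U := ⟨ZU, S', hZU, hS', h, g, ρ, hconf, hρ⟩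
  refine ⟨fun Z' hZ' => ⟨fun u => ⟨R.extend hvan₁ hZ' u, ?_⟩,
    fun _ => R.factorsThru_of_factorsThru_h_comp hsc hvan₂ hZ'⟩, ?_⟩
  · rw [R.h_comp_extend, sub_self]
    exact factorsThru_zero (nonempty_of_stronglyContraFinite hsc hZ') _ _
  have := isRightAdjoint_idealInclusion hvan₁ hsc hvan₂ hsub
  let adj := Adjunction.ofIsRightAdjoint (idealInclusion (Sc ∩ Zc) Zc _ hsub)
  exact ⟨_, ⟨adj⟩,
    ⟨(adj.corepresentableBy _).uniqueUpToIso (R.corepresentableBy hvan₁ hsc hvan₂ hsub)⟩⟩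
end

section
/- Let C be a triangulated category and ((S,T),(U,V)) a concentric twin cotorsion pair with I = S ∩ T and core Z = T ∩ U. For an s-triangle (distinguished triangle) A →^x B →^y C → A[1] with A, B ∈ Z: the cone C lies in U if and only if x is I-monic (every map A → I' with I' ∈ I factors through x). Dually, for a triangle A → B →^y C → A[1] with B, C ∈ Z: A ∈ T if and only if y is I-epic. -/
/-!
For a cotorsion pair `(U, V)`, an object lies in `U` exactly when it has no maps to `V⟦1⟧`.
Applying `Hom(-, v⟦1⟧)` to the triangle `A ⟶ B ⟶ C ⟶ A⟦1⟧` and using `Hom(B, V⟦1⟧) = 0`,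
`C ∈ U` says precisely that every map from `A` to an object of `V` factors through `x`.
Since `A ∈ U`, the `V`-envelope `A ⟶ v' ⟶ u' ⟶ A⟦1⟧` has `v' ∈ U ∩ V = I`, and every map
from `A` to `V` factors through it, so it is enough to factor maps into `I`.
The statement about `A ∈ T` is dual, using `S`-covers of `C`.
-/

open CategoryTheory CategoryTheory.Limits CategoryTheory.Pretriangulated

universe v u

namespace Stmt17

variable {C : Type u} [Category.{v} C] [Preadditive C] [HasZeroObject C] [HasShift C ℤ]
  [∀ n : ℤ, (shiftFunctor C n).Additive] [Pretriangulated C]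

def ClosedSummands (D : Set C) : Prop :=
  ∀ ⦃X Y : C⦄, X ∈ D → ∀ (i : Y ⟶ X) (p : X ⟶ Y), i ≫ p = 𝟙 Y → Y ∈ D

def CotorsionPair (U V : Set C) : Prop :=
  ClosedSummands U ∧ ClosedSummands V ∧
  (∀ ⦃u v : C⦄, u ∈ U → v ∈ V → ∀ f : u ⟶ v⟦(1 : ℤ)⟧, f = 0) ∧
  (∀ X : C, ∃ v ∈ V, ∃ u ∈ U, ∃ (a : v ⟶ u) (b : u ⟶ X) (c : X ⟶ v⟦(1 : ℤ)⟧),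
      Triangle.mk a b c ∈ distTriang C) ∧
  (∀ X : C, ∃ v ∈ V, ∃ u ∈ U, ∃ (a : X ⟶ v) (b : v ⟶ u) (c : u ⟶ X⟦(1 : ℤ)⟧),
      Triangle.mk a b c ∈ distTriang C)

def ConcentricTCP (S T U V : Set C) : Prop :=
  CotorsionPair S T ∧ CotorsionPair U V ∧ S ⊆ U ∧ S ∩ T = U ∩ V

lemma _root_.CategoryTheory.Pretriangulated.Triangle.yoneda_exact₁_s17 (T : Triangle C)
    (hT : T ∈ distTriang C) {X : C} (f : T.obj₁ ⟶ X) (hf : T.mor₃ ≫ f⟦(1 : ℤ)⟧' = 0) :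
    ∃ g : T.obj₂ ⟶ X, f = T.mor₁ ≫ g := by
  refine Triangle.yoneda_exact₂ _ (inv_rot_of_distTriang _ hT) f ?_
  let e := shiftFunctorCompIsoId C (1 : ℤ) (-1) (by omega)
  have hnat : e.hom.app T.obj₁ ≫ f = f⟦(1 : ℤ)⟧'⟦(-1 : ℤ)⟧' ≫ e.hom.app X :=
    (e.hom.naturality f).symm
  change (-(T.mor₃⟦(-1 : ℤ)⟧') ≫ e.hom.app T.obj₁) ≫ f = 0
  rw [Preadditive.neg_comp, Category.assoc, hnat, ← Functor.map_comp_assoc, hf]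
  simp

def IsMonicFor (D : Set C) {A B : C} (x : A ⟶ B) : Prop :=
  ∀ ⦃W : C⦄, W ∈ D → ∀ f : A ⟶ W, ∃ g : B ⟶ W, x ≫ g = f

def IsEpicFor (D : Set C) {B Y : C} (y : B ⟶ Y) : Prop :=
  ∀ ⦃W : C⦄, W ∈ D → ∀ f : W ⟶ Y, ∃ g : W ⟶ B, g ≫ y = f

lemma _root_.CategoryTheory.Pretriangulated.Triangle.forall_obj₃_to_shift_eq_zero_iff
    (T : Triangle C) (hT : T ∈ distTriang C) {X : C} (h₂ : ∀ g : T.obj₂ ⟶ X⟦(1 : ℤ)⟧, g = 0) :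
    (∀ c : T.obj₃ ⟶ X⟦(1 : ℤ)⟧, c = 0) ↔ ∀ f : T.obj₁ ⟶ X, ∃ g : T.obj₂ ⟶ X, T.mor₁ ≫ g = f := by
  refine ⟨fun h₃ f => ?_, fun h₁ c => ?_⟩
  · obtain ⟨g, hg⟩ := T.yoneda_exact₁_s17 hT f (h₃ _)
    exact ⟨g, hg.symm⟩
  · obtain ⟨c', rfl⟩ := T.yoneda_exact₃ hT c (h₂ _)
    obtain ⟨f, rfl⟩ := (shiftFunctor C (1 : ℤ)).map_surjective c'
    obtain ⟨g, rfl⟩ := h₁ f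
    rw [Functor.map_comp, ← Category.assoc, comp_distTriang_mor_zero₃₁ T hT, zero_comp]

lemma _root_.CategoryTheory.Pretriangulated.Triangle.forall_to_obj₁_shift_eq_zero_iff
    (T : Triangle C) (hT : T ∈ distTriang C) {X : C} (h₂ : ∀ g : X ⟶ T.obj₂⟦(1 : ℤ)⟧, g = 0) :
    (∀ c : X ⟶ T.obj₁⟦(1 : ℤ)⟧, c = 0) ↔ ∀ f : X ⟶ T.obj₃, ∃ g : X ⟶ T.obj₂, g ≫ T.mor₂ = f := by
  refine ⟨fun h₁ f => ?_, fun h₃ c => ?_⟩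
  · obtain ⟨g, hg⟩ := T.coyoneda_exact₃ hT f (h₁ _)
    exact ⟨g, hg.symm⟩
  · obtain ⟨f, rfl⟩ := T.coyoneda_exact₁ hT c (h₂ _)
    obtain ⟨g, rfl⟩ := h₃ f
    rw [Category.assoc, comp_distTriang_mor_zero₂₃ T hT, comp_zero]

namespace CotorsionPair

variable {U V : Set C} (h : CotorsionPair U V)
include h

lemma mem_left_iff {X : C} : X ∈ U ↔ ∀ v ∈ V, ∀ f : X ⟶ v⟦(1 : ℤ)⟧, f = 0 := by
  refine ⟨fun hX v hv => h.2.2.1 hX hv, fun hX => ?_⟩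
  obtain ⟨v, hv, u, hu, a, b, c, hT⟩ := h.2.2.2.1 X
  obtain ⟨s, hs⟩ := Triangle.coyoneda_exact₃ _ hT (𝟙 X)
    (by change 𝟙 X ≫ c = 0; rw [hX v hv c, comp_zero])
  exact h.1 hu s b hs.symm

lemma mem_right_iff {X : C} : X ∈ V ↔ ∀ u ∈ U, ∀ f : u ⟶ X⟦(1 : ℤ)⟧, f = 0 := by
  refine ⟨fun hX u hu => h.2.2.1 hu hX, fun hX => ?_⟩
  obtain ⟨v, hv, u, hu, a, b, c, hT⟩ := h.2.2.2.2 X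
  obtain ⟨r, hr⟩ := Triangle.yoneda_exact₁_s17 _ hT (𝟙 X) (by
    change c ≫ (𝟙 X)⟦(1 : ℤ)⟧' = 0; rw [hX u hu c, zero_comp])
  exact h.2.1 hv a r hr.symm

lemma mem_left_of_distTriang (T : Triangle C) (hT : T ∈ distTriang C)
    (h₁ : T.obj₁ ∈ U) (h₃ : T.obj₃ ∈ U) : T.obj₂ ∈ U :=
  h.mem_left_iff.2 fun v hv f => by
    obtain ⟨g, rfl⟩ := T.yoneda_exact₂ hT f (h.2.2.1 h₁ hv _)
    rw [h.2.2.1 h₃ hv g, comp_zero]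

lemma mem_right_of_distTriang (T : Triangle C) (hT : T ∈ distTriang C)
    (h₁ : T.obj₁ ∈ V) (h₃ : T.obj₃ ∈ V) : T.obj₂ ∈ V :=
  h.mem_right_iff.2 fun u hu f => by
    obtain ⟨g, rfl⟩ := T.rotate.coyoneda_exact₁ (rot_of_distTriang _ hT) f (h.2.2.1 hu h₃ _)
    rw [h.2.2.1 hu h₁ g]; exact zero_comp

lemma isMonicFor_right_iff {A B : C} (hA : A ∈ U) (x : A ⟶ B) :
    IsMonicFor V x ↔ IsMonicFor (U ∩ V) x := by
  refine ⟨fun hx _ hW => hx hW.2, fun hx v hv f => ?_⟩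
  obtain ⟨v', hv', u', hu', a, b, c, hT⟩ := h.2.2.2.2 A
  have hv'U : v' ∈ U := h.mem_left_of_distTriang _ hT hA hu'
  obtain ⟨e, rfl⟩ := Triangle.yoneda_exact₁_s17 _ hT f (h.2.2.1 hu' hv _)
  obtain ⟨g, rfl⟩ := hx ⟨hv'U, hv'⟩ a
  exact ⟨g ≫ e, (Category.assoc _ _ _).symm⟩

lemma isEpicFor_left_iff {B Y : C} (hY : Y ∈ V) (y : B ⟶ Y) :
    IsEpicFor U y ↔ IsEpicFor (U ∩ V) y := by
  refine ⟨fun hy _ hW => hy hW.1, fun hy u hu f => ?_⟩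
  obtain ⟨v', hv', u', hu', a, b, c, hT⟩ := h.2.2.2.1 Y
  have hu'V : u' ∈ V := h.mem_right_of_distTriang _ hT hv' hY
  obtain ⟨e, rfl⟩ := Triangle.coyoneda_exact₃ _ hT f (h.2.2.1 hu hv' _)
  obtain ⟨g, rfl⟩ := hy ⟨hu', hu'V⟩ b
  exact ⟨e ≫ g, Category.assoc _ _ _⟩

lemma obj₃_mem_left_iff (T : Triangle C) (hT : T ∈ distTriang C)
    (h₁ : T.obj₁ ∈ U) (h₂ : T.obj₂ ∈ U) : T.obj₃ ∈ U ↔ IsMonicFor (U ∩ V) T.mor₁ := by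
  rw [h.mem_left_iff, ← h.isMonicFor_right_iff h₁]
  exact forall₂_congr fun v hv =>
    T.forall_obj₃_to_shift_eq_zero_iff hT fun g => h.2.2.1 h₂ hv g

lemma obj₁_mem_right_iff (T : Triangle C) (hT : T ∈ distTriang C)
    (h₂ : T.obj₂ ∈ V) (h₃ : T.obj₃ ∈ V) : T.obj₁ ∈ V ↔ IsEpicFor (U ∩ V) T.mor₂ := by
  rw [h.mem_right_iff, ← h.isEpicFor_left_iff h₃]
  exact forall₂_congr fun u hu =>
    T.forall_to_obj₁_shift_eq_zero_iff hT fun g => h.2.2.1 hu h₂ g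

end CotorsionPair

theorem statement17 (S T U V : Set C) (h : ConcentricTCP S T U V) :
    -- the `U`-conic characterization
    (∀ (A B Cc : C), A ∈ T ∩ U → B ∈ T ∩ U →
      ∀ (x : A ⟶ B) (y : B ⟶ Cc) (z : Cc ⟶ A⟦(1 : ℤ)⟧),
        (Triangle.mk x y z ∈ distTriang C) →
        (Cc ∈ U ↔ ∀ ⦃W : C⦄, W ∈ S ∩ T → ∀ f : A ⟶ W, ∃ g : B ⟶ W, x ≫ g = f)) ∧
    -- the `T`-coconic characterization
    (∀ (A B Cc : C), B ∈ T ∩ U → Cc ∈ T ∩ U →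
      ∀ (x : A ⟶ B) (y : B ⟶ Cc) (z : Cc ⟶ A⟦(1 : ℤ)⟧),
        (Triangle.mk x y z ∈ distTriang C) →
        (A ∈ T ↔ ∀ ⦃W : C⦄, W ∈ S ∩ T → ∀ f : W ⟶ Cc, ∃ g : W ⟶ B, g ≫ y = f)) := by
  obtain ⟨hST, hUV, -, hI⟩ := h
  refine ⟨fun A B Cc hA hB x y z hT => ?_, fun A B Cc hB hC x y z hT => ?_⟩
  · rw [hI]
    exact hUV.obj₃_mem_left_iff _ hT hA.2 hB.2
  · exact hST.obj₁_mem_right_iff _ hT hB.1 hC.1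

end Stmt17
end
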